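/- Fix p ∈ (0,1), α > β > γ ≥ 0, and a correlation parameter ρ with −min(p/(1−p), (1−p)/p) < ρ < 0 (so all four joint probabilities are strictly positive). Let ES_ρ := P_HH·α + (P_HL + P_LH)·β + P_LL·γ be the prior expected surplus under correlation ρ. Then for every test accuracy π ∈ (0,1] there exists c̄ > 0 such that for all costs c with 0 ≤ c < c̄, setting Π := ES_ρ: the Bayesian blocking condition fails (ES_ρ ≤ Π), yet the test (π,c) blocks Π, i.e. V_ρ(π,c,Π) := π·(P_HH·max(α,Π) + (P_HL+P_LH)·max(β,Π) + P_LL·max(γ,Π)) + (1−π)·max(ES_ρ,Π) − c > Π. Hence under negative correlation, with an informative feasible test of sufficiently small cost, ICPS strictly refines Bayesian stability. -/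
import Mathlib


/-- Prior expected surplus under a correlated joint type distribution with marginal
`p` and correlation `ρ`. -/
noncomputable def EScorr (p ρ α β γ : ℝ) : ℝ :=
  (p ^ 2 + ρ * p * (1 - p)) * α + 2 * p * (1 - p) * (1 - ρ) * β
    + ((1 - p) ^ 2 + ρ * p * (1 - p)) * γ

/-- Deviation value under a test of accuracy `π` and cost `c` with correlated types. -/
noncomputable def Vcorr (p ρ α β γ π c Pi : ℝ) : ℝ :=
  π * ((p ^ 2 + ρ * p * (1 - p)) * max α Pi + 2 * p * (1 - p) * (1 - ρ) * max β Pi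
        + ((1 - p) ^ 2 + ρ * p * (1 - p)) * max γ Pi)
    + (1 - π) * max (EScorr p ρ α β γ) Pi - c

/-- Under strictly negative correlation (with all four joint
probabilities positive), for every informative test accuracy `π ∈ (0,1]` there is a
cost threshold `c̄ > 0` such that for all costs `c ∈ [0, c̄)`, at `Pi := ES_ρ` the
Bayesian blocking condition fails yet the test `(π,c)` blocks `Pi`: ICPS strictly
refines Bayesian stability. -/
theorem negative_correlation_strict_refinement
    (p ρ α β γ : ℝ) (hp0 : 0 < p) (hp1 : p < 1)
    (hαβ : β < α) (hβγ : γ < β) (hγ : 0 ≤ γ)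
    (hρneg : ρ < 0) (hρlb : -min (p / (1 - p)) ((1 - p) / p) < ρ) :
    ∀ π : ℝ, 0 < π → π ≤ 1 →
      ∃ cbar : ℝ, 0 < cbar ∧ ∀ c : ℝ, 0 ≤ c → c < cbar →
        ¬ (EScorr p ρ α β γ > EScorr p ρ α β γ)
        ∧ Vcorr p ρ α β γ π c (EScorr p ρ α β γ) > EScorr p ρ α β γ := by
  intro π hπ0 hπ1
  have h1p : 0 < 1 - p := by linarith
  have hlb1 : -(p / (1 - p)) < ρ := lt_of_le_of_lt (by
    have := min_le_left (p / (1 - p)) ((1 - p) / p); linarith) hρlb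
  have hlb2 : -((1 - p) / p) < ρ := lt_of_le_of_lt (by
    have := min_le_right (p / (1 - p)) ((1 - p) / p); linarith) hρlb
  have h1 : -p < ρ * (1 - p) := by
    have h := (lt_div_iff₀ h1p).mp (show -ρ < p / (1 - p) by linarith)
    nlinarith
  have h2 : -(1 - p) < ρ * p := by
    have h := (lt_div_iff₀ hp0).mp (show -ρ < (1 - p) / p by linarith)
    nlinarith
  have hPHH : 0 < p ^ 2 + ρ * p * (1 - p) := by nlinarith
  have hPLL : 0 < (1 - p) ^ 2 + ρ * p * (1 - p) := by nlinarith
  have hPm : 0 < 2 * p * (1 - p) * (1 - ρ) := by nlinarith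
  set E := EScorr p ρ α β γ with hE
  have hsum : (p ^ 2 + ρ * p * (1 - p)) + 2 * p * (1 - p) * (1 - ρ)
      + ((1 - p) ^ 2 + ρ * p * (1 - p)) = 1 := by ring
  have hEγ : γ < E := by
    have : E - γ = (p ^ 2 + ρ * p * (1 - p)) * (α - γ)
        + 2 * p * (1 - p) * (1 - ρ) * (β - γ) := by rw [hE, EScorr]; ring
    nlinarith [mul_pos hPHH (by linarith : (0:ℝ) < α - γ),
      mul_pos hPm (by linarith : (0:ℝ) < β - γ)]
  have hmaxα : max α E ≥ α := le_max_left _ _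
  have hmaxβ : max β E ≥ β := le_max_left _ _
  have hmaxγ : max γ E = E := max_eq_right hEγ.le
  have hmaxEE : max E E = E := max_self E
  refine ⟨π * (((1 - p) ^ 2 + ρ * p * (1 - p)) * (E - γ)),
    mul_pos hπ0 (mul_pos hPLL (by linarith)), fun c hc0 hc => ⟨lt_irrefl E, ?_⟩⟩
  have hEeq : E = (p ^ 2 + ρ * p * (1 - p)) * α + 2 * p * (1 - p) * (1 - ρ) * β
      + ((1 - p) ^ 2 + ρ * p * (1 - p)) * γ := by rw [hE, EScorr]
  have hS : (p ^ 2 + ρ * p * (1 - p)) * max α E + 2 * p * (1 - p) * (1 - ρ) * max β E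
      + ((1 - p) ^ 2 + ρ * p * (1 - p)) * max γ E
      ≥ E + ((1 - p) ^ 2 + ρ * p * (1 - p)) * (E - γ) := by
    rw [hmaxγ]
    have hA := mul_le_mul_of_nonneg_left hmaxα hPHH.le
    have hB := mul_le_mul_of_nonneg_left hmaxβ hPm.le
    nlinarith [hEeq]
  have hmul : π * ((p ^ 2 + ρ * p * (1 - p)) * max α E + 2 * p * (1 - p) * (1 - ρ) * max β E
      + ((1 - p) ^ 2 + ρ * p * (1 - p)) * max γ E)
      ≥ π * (E + ((1 - p) ^ 2 + ρ * p * (1 - p)) * (E - γ)) :=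
    mul_le_mul_of_nonneg_left hS hπ0.le
  have hV : Vcorr p ρ α β γ π c E = π * ((p ^ 2 + ρ * p * (1 - p)) * max α E
      + 2 * p * (1 - p) * (1 - ρ) * max β E
      + ((1 - p) ^ 2 + ρ * p * (1 - p)) * max γ E) + (1 - π) * E - c := by
    rw [Vcorr, ← hE, hmaxEE]
  have hexp : π * (E + ((1 - p) ^ 2 + ρ * p * (1 - p)) * (E - γ))
      = π * E + π * (((1 - p) ^ 2 + ρ * p * (1 - p)) * (E - γ)) := by ring
  linarith
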